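/- arXiv:2007.12879 — 3 statements merged into one kernel-verified Lean document; each statement's English description precedes it below -/
import Mathlib

section
/- For each integer n ≥ 0: a1(0, 4n+2) = (−1)^n · 2^{−(4n+1)/2} · C(2n, n), a1(0, 4n) = 0, a2(0, 4n+2) = 0, and (for n ≥ 1) a2(0, 4n) = (−1)^n · 2^{−(4n−1)/2} · C(2n−1, n). -/
open scoped BigOperators

noncomputable section

/-- Endpoint `x`-coordinate of a checker path of `n` steps encoded by step directions:
`true` = step `(1,1)`, `false` = step `(-1,1)`. -/
def endpt {n : ℕ} (d : Fin n → Bool) : ℤ :=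
  ∑ i, (if d i then (1 : ℤ) else -1)

/-- The number of turns of a checker path encoded by step directions. -/
def turns {n : ℕ} (d : Fin n → Bool) : ℕ :=
  ((Finset.range n).filter fun i =>
    ∃ h : i + 1 < n, d ⟨i, Nat.lt_of_succ_lt h⟩ ≠ d ⟨i + 1, h⟩).card

/-- Checker paths from `(0,0)` to `(x,n)` with the first step to `(1,1)`,
encoded by their step directions. -/
def pathsTo (x : ℤ) (n : ℕ) : Finset (Fin n → Bool) :=
  Finset.univ.filter fun d => (∃ h : 0 < n, d ⟨0, h⟩ = true) ∧ endpt d = x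

/-- Feynman checkers with mass `m` and lattice step `ε`: the value `a(εx, εt, m, ε)`,
where `x t : ℤ` are the coordinates in units of `ε`. -/
def am (x t : ℤ) (m ε : ℝ) : ℂ :=
  (1 + m ^ 2 * ε ^ 2 : ℂ) ^ ((1 - (t : ℂ)) / 2) * Complex.I *
    ∑ d ∈ pathsTo x t.toNat, (-Complex.I * (m * ε)) ^ turns d

/-- The basic model: `a(x,t)`. -/
def a (x t : ℤ) : ℂ :=
  (2 : ℂ) ^ ((1 - (t : ℂ)) / 2) * Complex.I *
    ∑ d ∈ pathsTo x t.toNat, (-Complex.I) ^ turns d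

/-!
Split the paths by their last step. Let `W_b(p, q)` be the weighted sum over the paths with
`p + 1` up-steps and `q` down-steps whose last step is `b`. Appending a step multiplies the weight
by `-i` exactly when it makes a turn, so `W_↑(p+1, q) = W_↑(p, q) - i W_↓(p, q)` and
`W_↓(p, q+1) = W_↓(p, q) - i W_↑(p, q)`. The coefficients of `(1 - X)^p (1 + X)^q` satisfy the
same Pascal-type recurrences, whence `W_↑(p, q+1) = [X^(q+1)] (1 - X)^p (1 + X)^q` and
`W_↓(p, q+1) = -i [X^q] (1 - X)^p (1 + X)^q`. At `x = 0`, `t = 2N + 2` only `p = q = N` occurs,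
and `(1 - X)^N (1 + X)^N = (1 - X²)^N` has the coefficient `(-1)^k C(N, k)` in degree `2k` and
none in odd degree: the parity of `N` decides whether `a(0, t)` is real or purely imaginary.
-/

open Finset Complex Polynomial

theorem coeff_one_sub_X_pow (N k : ℕ) :
    ((1 - X : ℤ[X]) ^ N).coeff k = (-1) ^ k * N.choose k := by
  have h : (1 - X : ℤ[X]) ^ N = C ((-1) ^ N) * (X + C (-1)) ^ N := by
    rw [C_pow, ← mul_pow, map_neg, C_1]; ring
  rw [h, coeff_C_mul, coeff_X_add_C_pow]
  rcases le_or_gt k N with hk | hk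
  · obtain ⟨j, rfl⟩ := Nat.exists_eq_add_of_le hk
    rw [Nat.add_sub_cancel_left, ← mul_assoc, ← pow_add, add_assoc, pow_add,
      Even.neg_one_pow ⟨j, rfl⟩, mul_one]
  · simp [Nat.choose_eq_zero_of_lt hk]

def pathPoly (p q : ℕ) : ℤ[X] := (1 - X) ^ p * (1 + X) ^ q

theorem coeff_pathPoly_succ_left (p q k : ℕ) :
    (pathPoly (p + 1) q).coeff (k + 1) = (pathPoly p q).coeff (k + 1) - (pathPoly p q).coeff k := by
  rw [show pathPoly (p + 1) q = pathPoly p q - X * pathPoly p q by unfold pathPoly; ring,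
    coeff_sub, coeff_X_mul]

theorem coeff_pathPoly_succ_right (p q k : ℕ) :
    (pathPoly p (q + 1)).coeff (k + 1) = (pathPoly p q).coeff (k + 1) + (pathPoly p q).coeff k := by
  rw [show pathPoly p (q + 1) = pathPoly p q + X * pathPoly p q by unfold pathPoly; ring,
    coeff_add, coeff_X_mul]

theorem pathPoly_self (N : ℕ) : pathPoly N N = expand ℤ 2 ((1 - X) ^ N) := by
  rw [pathPoly, ← mul_pow, map_pow, map_sub, map_one, expand_X]; ring

theorem coeff_pathPoly_self_two_mul (N k : ℕ) :
    (pathPoly N N).coeff (2 * k) = (-1) ^ k * N.choose k := by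
  rw [pathPoly_self, coeff_expand_mul' two_pos, coeff_one_sub_X_pow]

theorem coeff_pathPoly_self_two_mul_add_one (N k : ℕ) :
    (pathPoly N N).coeff (2 * k + 1) = 0 := by
  rw [pathPoly_self, coeff_expand two_pos, if_neg (by omega)]

def step (b : Bool) : ℤ := if b then 1 else -1

theorem endpt_snoc {n : ℕ} (d : Fin n → Bool) (c : Bool) :
    endpt (Fin.snoc d c : Fin (n + 1) → Bool) = endpt d + step c := by
  simp [endpt, step, Fin.sum_univ_castSucc]

theorem abs_endpt_le {n : ℕ} (d : Fin n → Bool) : |endpt d| ≤ n := by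
  calc |endpt d| ≤ ∑ i, |step (d i)| := abs_sum_le_sum_abs _ _
    _ = n := by simp [step, apply_ite]

theorem mem_pathsTo_succ {x : ℤ} {n : ℕ} {d : Fin (n + 1) → Bool} :
    d ∈ pathsTo x (n + 1) ↔ d 0 = true ∧ endpt d = x := by
  simp [pathsTo]

theorem pathsTo_succ_eq_empty {x : ℤ} {n : ℕ} (h : x < 1 - n ∨ n + 1 < x) :
    pathsTo x (n + 1) = ∅ := by
  refine eq_empty_of_forall_notMem fun d hd => ?_
  obtain ⟨hd0, rfl⟩ := mem_pathsTo_succ.1 hd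
  have hsplit : endpt d = 1 + endpt (Fin.tail d) := by
    rw [endpt, Fin.sum_univ_succ, hd0]; rfl
  have := abs_le.1 (abs_endpt_le (Fin.tail d))
  omega

theorem snoc_mem_pathsTo {x : ℤ} {n : ℕ} {d : Fin (n + 1) → Bool} {c : Bool} :
    (Fin.snoc d c : Fin (n + 2) → Bool) ∈ pathsTo x (n + 2) ↔ d ∈ pathsTo (x - step c) (n + 1) := by
  rw [mem_pathsTo_succ, mem_pathsTo_succ, endpt_snoc, eq_sub_iff_add_eq]
  rfl

theorem turns_eq_card {n : ℕ} (d : Fin (n + 1) → Bool) :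
    turns d = #{i : Fin n | d i.castSucc ≠ d i.succ} := by
  rw [turns, card_filter, card_filter, sum_range_succ, sum_range]
  simp only [lt_irrefl, IsEmpty.exists_iff, if_false, add_zero]
  refine sum_congr rfl fun i _ => ?_
  simp only [add_lt_add_iff_right, i.isLt, exists_true_left]
  rfl

theorem turns_snoc {n : ℕ} (d : Fin (n + 1) → Bool) (c : Bool) :
    turns (Fin.snoc d c : Fin (n + 2) → Bool) = turns d + if d (Fin.last n) = c then 0 else 1 := by
  rw [turns_eq_card, turns_eq_card, card_filter, card_filter, Fin.sum_univ_castSucc]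
  simp only [Fin.succ_castSucc, Fin.snoc_castSucc, Fin.succ_last, Fin.snoc_last, ite_not]

def lastStepSum (x : ℤ) (n : ℕ) (b : Bool) : ℂ :=
  ∑ d ∈ pathsTo x (n + 1) with d (Fin.last n) = b, (-I) ^ turns d

theorem sum_pathsTo_succ (x : ℤ) (n : ℕ) :
    ∑ d ∈ pathsTo x (n + 1), (-I) ^ turns d = lastStepSum x n true + lastStepSum x n false := by
  rw [lastStepSum, lastStepSum, ← sum_filter_add_sum_filter_not _ (fun d => d (Fin.last n) = true)]
  simp only [Bool.not_eq_true]

theorem lastStepSum_eq_zero {x : ℤ} {n : ℕ} (b : Bool) (h : x < 1 - n ∨ n + 1 < x) :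
    lastStepSum x n b = 0 := by
  rw [lastStepSum, pathsTo_succ_eq_empty h, filter_empty, sum_empty]

theorem lastStepSum_one_zero (b : Bool) : lastStepSum 1 0 b = if b then 1 else 0 := by
  have hpaths : pathsTo 1 1 = {fun _ => true} := by decide
  cases b <;> simp [lastStepSum, hpaths, filter_singleton, turns]

theorem lastStepSum_succ (x : ℤ) (n : ℕ) (b : Bool) :
    lastStepSum x (n + 1) b =
      lastStepSum (x - step b) n b + (-I) * lastStepSum (x - step b) n (!b) := by
  have hsnoc : lastStepSum x (n + 1) b =
      ∑ d ∈ pathsTo (x - step b) (n + 1), (-I) ^ turns (Fin.snoc d b : Fin (n + 2) → Bool) := by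
    have snoc_init : ∀ d ∈ (pathsTo x (n + 2)).filter (fun d => d (Fin.last (n + 1)) = b),
        Fin.snoc (Fin.init d) b = d := fun d hd => (mem_filter.1 hd).2 ▸ Fin.snoc_init_self d
    refine sum_nbij' Fin.init (Fin.snoc · b) (fun d hd => ?_) (fun d hd => ?_) snoc_init
      (fun d _ => Fin.init_snoc _ _) (fun d hd => by rw [snoc_init d hd])
    · rw [← snoc_mem_pathsTo, snoc_init d hd]
      exact (mem_filter.1 hd).1
    · exact mem_filter.2 ⟨snoc_mem_pathsTo.2 hd, Fin.snoc_last _ _⟩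
  rw [hsnoc, ← sum_filter_add_sum_filter_not _ (fun d => d (Fin.last n) = b), lastStepSum,
    lastStepSum, mul_sum]
  congr 1
  · refine sum_congr rfl fun d hd => ?_
    rw [turns_snoc, if_pos (mem_filter.1 hd).2, add_zero]
  · refine sum_congr (filter_congr fun d _ => Bool.eq_not.symm) fun d hd => ?_
    rw [turns_snoc, if_neg (Bool.eq_not.1 (mem_filter.1 hd).2), pow_succ, mul_comm]

/-- The paths counted have `p + 1` up-steps (the first step included) and `q` down-steps. -/
def stepCountSum (b : Bool) (p q : ℕ) : ℂ := lastStepSum ((p : ℤ) + 1 - q) (p + q) b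

theorem stepCountSum_true_succ_left (p q : ℕ) :
    stepCountSum true (p + 1) q = stepCountSum true p q + (-I) * stepCountSum false p q := by
  have hx : ((p + 1 : ℕ) : ℤ) + 1 - q - step true = p + 1 - q := by simp [step]; ring
  simp only [stepCountSum]
  rw [show p + 1 + q = p + q + 1 by omega, lastStepSum_succ, hx, Bool.not_true]

theorem stepCountSum_false_succ_right (p q : ℕ) :
    stepCountSum false p (q + 1) = stepCountSum false p q + (-I) * stepCountSum true p q := by
  have hx : (p : ℤ) + 1 - (q + 1 : ℕ) - step false = p + 1 - q := by simp [step]; ring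
  simp only [stepCountSum]
  rw [← add_assoc, lastStepSum_succ, hx, Bool.not_false]

theorem stepCountSum_true_zero_succ (q : ℕ) : stepCountSum true 0 (q + 1) = 0 := by
  rw [stepCountSum, zero_add, lastStepSum_succ, lastStepSum_eq_zero _ (by simp [step]),
    lastStepSum_eq_zero _ (by simp [step]), mul_zero, add_zero]

theorem stepCountSum_false_zero_right (p : ℕ) : stepCountSum false p 0 = 0 := by
  cases p with
  | zero => simp [stepCountSum, lastStepSum_one_zero]
  | succ p =>
    rw [stepCountSum, add_zero, lastStepSum_succ, lastStepSum_eq_zero _ (by simp [step]),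
      lastStepSum_eq_zero _ (by simp [step]), mul_zero, add_zero]

theorem stepCountSum_true_zero_right (p : ℕ) : stepCountSum true p 0 = 1 := by
  induction p with
  | zero => simp [stepCountSum, lastStepSum_one_zero]
  | succ p ih =>
    rw [stepCountSum_true_succ_left, ih, stepCountSum_false_zero_right, mul_zero, add_zero]

theorem stepCountSum_true_succ_eq_coeff (q : ℕ)
    (hfalse : ∀ p, stepCountSum false p (q + 1) = -I * (pathPoly p q).coeff q) (p : ℕ) :
    stepCountSum true p (q + 1) = (pathPoly p q).coeff (q + 1) := by
  induction p with
  | zero =>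
    rw [stepCountSum_true_zero_succ]
    simp [pathPoly, coeff_one_add_X_pow]
  | succ p ih =>
    rw [stepCountSum_true_succ_left, ih, hfalse, coeff_pathPoly_succ_left]
    push_cast
    linear_combination ((pathPoly p q).coeff q : ℂ) * I_sq

theorem stepCountSum_false_succ_eq_coeff (q : ℕ) :
    ∀ p, stepCountSum false p (q + 1) = -I * (pathPoly p q).coeff q := by
  induction q with
  | zero =>
    intro p
    rw [stepCountSum_false_succ_right, stepCountSum_false_zero_right, stepCountSum_true_zero_right]
    simp [pathPoly, coeff_one_sub_X_pow]
  | succ q ih =>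
    intro p
    rw [stepCountSum_false_succ_right, ih, stepCountSum_true_succ_eq_coeff q ih,
      coeff_pathPoly_succ_right]
    push_cast
    ring

theorem sum_pathsTo_zero_two_mul_add_two (N : ℕ) :
    ∑ d ∈ pathsTo 0 (2 * N + 2), (-I) ^ turns d
      = (pathPoly N N).coeff (N + 1) - I * (pathPoly N N).coeff N := by
  have hend : ∀ b, lastStepSum 0 (2 * N + 1) b = stepCountSum b N (N + 1) := fun b => by
    rw [stepCountSum, show N + (N + 1) = 2 * N + 1 by omega]
    congr 1
    push_cast
    ring
  rw [sum_pathsTo_succ, hend, hend,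
    stepCountSum_true_succ_eq_coeff N (stepCountSum_false_succ_eq_coeff N),
    stepCountSum_false_succ_eq_coeff]
  ring

theorem a_zero_two_mul_add_two (N : ℕ) :
    a 0 (2 * N + 2) = ((2 : ℝ) ^ (-(2 * N + 1 : ℝ) / 2) : ℝ)
      * ((pathPoly N N).coeff N + (pathPoly N N).coeff (N + 1) * I) := by
  have hexp : (1 - ((2 * N + 2 : ℤ) : ℂ)) / 2 = ((-(2 * N + 1 : ℝ) / 2 : ℝ) : ℂ) := by
    push_cast; ring
  rw [a, show (2 * (N : ℤ) + 2).toNat = 2 * N + 2 by omega, sum_pathsTo_zero_two_mul_add_two, hexp,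
    ← ofReal_ofNat, ← ofReal_cpow zero_le_two, mul_assoc]
  congr 1
  linear_combination (-((pathPoly N N).coeff N : ℂ)) * I_sq

theorem a_zero_zero : a 0 0 = 0 := by
  simp [a, pathsTo]

theorem a_zero_four_mul_add_two (n : ℕ) :
    a 0 (4 * n + 2) =
      ((-1 : ℝ) ^ n * (2 : ℝ) ^ (-(4 * (n : ℝ) + 1) / 2) * (2 * n).choose n : ℝ) := by
  rw [show 4 * (n : ℤ) + 2 = 2 * (2 * n : ℕ) + 2 by push_cast; ring, a_zero_two_mul_add_two,
    coeff_pathPoly_self_two_mul, coeff_pathPoly_self_two_mul_add_one]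
  push_cast
  ring_nf

theorem a_zero_four_mul {n : ℕ} (hn : n ≠ 0) :
    a 0 (4 * n) =
      ((-1 : ℝ) ^ n * (2 : ℝ) ^ (-(4 * (n : ℝ) - 1) / 2) * (2 * n - 1).choose n : ℝ) * I := by
  obtain ⟨m, rfl⟩ : ∃ m, n = m + 1 := ⟨n - 1, by omega⟩
  rw [show 4 * ((m + 1 : ℕ) : ℤ) = 2 * (2 * m + 1 : ℕ) + 2 by push_cast; ring,
    a_zero_two_mul_add_two, coeff_pathPoly_self_two_mul_add_one,
    show 2 * m + 1 + 1 = 2 * (m + 1) by ring, coeff_pathPoly_self_two_mul,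
    show 2 * (m + 1) - 1 = 2 * m + 1 by omega]
  push_cast
  ring_nf

/-- Particular values of the basic model at x = 0. -/
theorem particular_values (n : ℕ) :
    (a 0 (4 * (n : ℤ) + 2)).re
      = (-1 : ℝ) ^ n * (2 : ℝ) ^ (-(4 * (n : ℝ) + 1) / 2) * ((2 * n).choose n) ∧
    (a 0 (4 * (n : ℤ))).re = 0 ∧
    (a 0 (4 * (n : ℤ) + 2)).im = 0 ∧
    (1 ≤ n → (a 0 (4 * (n : ℤ))).im
      = (-1 : ℝ) ^ n * (2 : ℝ) ^ (-(4 * (n : ℝ) - 1) / 2) * ((2 * n - 1).choose n)) := by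
  refine ⟨?_, ?_, ?_, fun hn => ?_⟩
  · rw [a_zero_four_mul_add_two, ofReal_re]
  · rcases eq_or_ne n 0 with rfl | hn
    · simp [a_zero_zero]
    · rw [a_zero_four_mul hn, mul_I_re, ofReal_im, neg_zero]
  · rw [a_zero_four_mul_add_two, ofReal_im]
  · rw [a_zero_four_mul (by omega), mul_I_im, ofReal_re]
end
end

section
/- Fix ε > 0 and m ≥ 0. For each t ∈ εℤ with t > 0, Σ_{x ∈ εℤ} P(x,t,m,ε) = 1, where P(x,t,m,ε) := |a(x,t,m,ε)|². -/
open scoped BigOperators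

noncomputable section

/-!
Split the path sum by the direction of the last step: `A₊(x, n)` runs over the paths ending with a
step to the right, `A₋(x, n)` over those ending with a step to the left. Appending a step adds a
turn exactly when it changes direction, so with `k = -imε`
`A₊(x, n+1) = A₊(x-1, n) + k A₋(x-1, n)` and `A₋(x, n+1) = A₋(x+1, n) + k A₊(x+1, n)`.
As `k` is purely imaginary, `A₊` stays real and `A₋` purely imaginary. Hence
`|A₊ + A₋|² = |A₊|² + |A₋|²`, and the cross terms cancel in
`|B + kC|² + |C + kB|² = (1 + |k|²)(|B|² + |C|²)`, so each step multiplies `Σₓ (|A₊|² + |A₋|²)`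
by `1 + m²ε²`, which the prefactor `(1 + m²ε²)^((1-t)/2)` compensates exactly.
-/

namespace FeynmanCheckers

open Finset

theorem turns_eq_sum {n : ℕ} (d : Fin (n + 1) → Bool) :
    turns d = ∑ i : Fin n, if d i.castSucc ≠ d i.succ then 1 else 0 := by
  rw [turns, card_filter, sum_range_succ, sum_range fun i => _]
  simp only [lt_self_iff_false, IsEmpty.exists_iff, if_false, add_zero]
  refine sum_congr rfl fun i _ => ?_
  simp only [Nat.succ_lt_succ i.isLt, exists_true_left]
  rfl

theorem endpt_snoc {n : ℕ} (e : Fin n → Bool) (b : Bool) :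
    endpt (Fin.snoc e b) = endpt e + if b then 1 else -1 := by
  simp [endpt, Fin.sum_univ_castSucc]

theorem turns_snoc {n : ℕ} (e : Fin (n + 1) → Bool) (b : Bool) :
    turns (Fin.snoc e b) = turns e + if e (Fin.last n) = b then 0 else 1 := by
  rw [turns_eq_sum, turns_eq_sum e, Fin.sum_univ_castSucc]
  congr 1
  · refine sum_congr rfl fun i _ => ?_
    rw [← Fin.castSucc_succ, Fin.snoc_castSucc, Fin.snoc_castSucc]
  · rw [Fin.succ_last, Fin.snoc_castSucc, Fin.snoc_last]
    by_cases h : e (Fin.last n) = b <;> simp [h]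

theorem abs_endpt_le {n : ℕ} (d : Fin n → Bool) : |endpt d| ≤ n :=
  calc |endpt d| ≤ ∑ i, |if d i then (1 : ℤ) else -1| := abs_sum_le_sum_abs _ _
    _ = n := by simp [apply_ite]

theorem pathsTo_eq_empty {x : ℤ} {n : ℕ} (h : (n : ℤ) < |x|) : pathsTo x n = ∅ := by
  refine filter_false_of_mem fun d _ ⟨_, hd⟩ => ?_
  exact (abs_endpt_le d).not_gt (hd ▸ h)

theorem mem_pathsTo_succ {x : ℤ} {n : ℕ} {d : Fin (n + 1) → Bool} :
    d ∈ pathsTo x (n + 1) ↔ d 0 = true ∧ endpt d = x := by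
  simp [pathsTo]

theorem filter_last_pathsTo (x : ℤ) (n : ℕ) (b : Bool) :
    (pathsTo x (n + 2)).filter (fun d => d (Fin.last (n + 1)) = b) =
      (pathsTo (x - if b then 1 else -1) (n + 1)).map
        ⟨fun e => Fin.snoc e b, Fin.snoc_left_injective (α := fun _ => Bool) b⟩ := by
  ext d
  simp only [mem_filter, mem_map, mem_pathsTo_succ, Function.Embedding.coeFn_mk]
  constructor
  · rintro ⟨⟨h0, hx⟩, rfl⟩
    have := endpt_snoc (Fin.init d) (d (Fin.last _))
    rw [Fin.snoc_init_self] at this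
    exact ⟨Fin.init d, ⟨h0, by omega⟩, Fin.snoc_init_self d⟩
  · rintro ⟨e, ⟨h0, hx⟩, rfl⟩
    exact ⟨⟨by simpa using h0, by rw [endpt_snoc, hx]; ring⟩, Fin.snoc_last _ _⟩

def lastStepSum (k : ℂ) (x : ℤ) (n : ℕ) (b : Bool) : ℂ :=
  ∑ d ∈ (pathsTo x (n + 1)).filter (fun d => d (Fin.last n) = b), k ^ turns d

theorem sum_pathsTo_eq_lastStepSum_add (k : ℂ) (x : ℤ) (n : ℕ) :
    ∑ d ∈ pathsTo x (n + 1), k ^ turns d = lastStepSum k x n true + lastStepSum k x n false := by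
  rw [← sum_filter_add_sum_filter_not _ (fun d => d (Fin.last n) = true)]
  simp [lastStepSum]

theorem lastStepSum_zero (k : ℂ) (x : ℤ) (b : Bool) :
    lastStepSum k x 0 b = if x = 1 ∧ b = true then 1 else 0 := by
  have hturns (d : Fin 1 → Bool) : turns d = 0 := by simp [turns]
  have hendpt (d : Fin 1 → Bool) : endpt d = if d 0 then 1 else -1 := by simp [endpt]
  rw [lastStepSum, pathsTo, filter_filter, sum_filter,
    ← (Equiv.funUnique (Fin 1) Bool).symm.sum_comp, Fintype.sum_bool]
  rcases b <;> by_cases hx : x = 1 <;> simp [hturns, hendpt, hx, eq_comm]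

theorem lastStepSum_succ (k : ℂ) (x : ℤ) (n : ℕ) (b : Bool) :
    lastStepSum k x (n + 1) b = lastStepSum k (x - if b then 1 else -1) n b
      + k * lastStepSum k (x - if b then 1 else -1) n (!b) := by
  rw [lastStepSum, lastStepSum, lastStepSum, filter_last_pathsTo, sum_map,
    Function.Embedding.coeFn_mk,
    ← sum_filter_add_sum_filter_not _ (fun e => e (Fin.last n) = b), mul_sum]
  congr 1
  · exact sum_congr rfl fun e he => by rw [turns_snoc, if_pos (mem_filter.1 he).2, add_zero]
  · refine sum_congr (filter_congr fun e _ => by cases b <;> simp) fun e he => ?_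
    rw [turns_snoc, if_neg ((mem_filter.1 he).2 ▸ Bool.not_ne_self b), pow_succ']

variable {k : ℂ}

theorem lastStepSum_eq_zero {x : ℤ} {n : ℕ} (h : (n : ℤ) + 1 < |x|) (b : Bool) :
    lastStepSum k x n b = 0 := by
  rw [lastStepSum, pathsTo_eq_empty (by push_cast; exact h), filter_empty, sum_empty]

theorem im_lastStepSum_true_and_re_lastStepSum_false (hk : k.re = 0) (x : ℤ) (n : ℕ) :
    (lastStepSum k x n true).im = 0 ∧ (lastStepSum k x n false).re = 0 := by
  induction n generalizing x with
  | zero => constructor <;> simp [lastStepSum_zero, apply_ite]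
  | succ n ih =>
    simp [lastStepSum_succ, hk, (ih _).1, (ih _).2]

theorem sq_norm_add_of_im_eq_zero_of_re_eq_zero {z w : ℂ} (hz : z.im = 0) (hw : w.re = 0) :
    ‖z + w‖ ^ 2 = ‖z‖ ^ 2 + ‖w‖ ^ 2 := by
  simp only [Complex.sq_norm, Complex.normSq_apply, Complex.add_re, Complex.add_im, hz, hw]
  ring

theorem sq_norm_add_mul_add_sq_norm_add_mul {z w : ℂ} (hk : k.re = 0) (hz : z.im = 0)
    (hw : w.re = 0) :
    ‖z + k * w‖ ^ 2 + ‖w + k * z‖ ^ 2 = (1 + ‖k‖ ^ 2) * (‖z‖ ^ 2 + ‖w‖ ^ 2) := by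
  simp only [Complex.sq_norm, Complex.normSq_apply, Complex.add_re, Complex.add_im,
    Complex.mul_re, Complex.mul_im, hk, hz, hw]
  ring

theorem summable_comp_lastStepSum (n : ℕ) {F : ℂ → ℂ → ℝ} (hF : F 0 0 = 0) :
    Summable fun x => F (lastStepSum k x n true) (lastStepSum k x n false) := by
  refine summable_of_ne_finset_zero (s := Icc (-(n : ℤ) - 1) (n + 1)) fun x hx => ?_
  rw [mem_Icc] at hx
  rwa [lastStepSum_eq_zero (lt_abs.2 (by omega)), lastStepSum_eq_zero (lt_abs.2 (by omega))]

theorem tsum_sq_norm_lastStepSum (hk : k.re = 0) (n : ℕ) :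
    ∑' x, (‖lastStepSum k x n true‖ ^ 2 + ‖lastStepSum k x n false‖ ^ 2) = (1 + ‖k‖ ^ 2) ^ n := by
  induction n with
  | zero => simp [lastStepSum_zero, apply_ite]
  | succ n ih =>
    set z := fun x => lastStepSum k x n true
    set w := fun x => lastStepSum k x n false
    have hz : Summable fun x => ‖z x + k * w x‖ ^ 2 :=
      summable_comp_lastStepSum n (F := fun z w => ‖z + k * w‖ ^ 2) (by simp)
    have hw : Summable fun x => ‖w x + k * z x‖ ^ 2 :=
      summable_comp_lastStepSum n (F := fun z w => ‖w + k * z‖ ^ 2) (by simp)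
    have hz' : Summable fun x => ‖z (x - 1) + k * w (x - 1)‖ ^ 2 :=
      ((Equiv.subRight 1).summable_iff (f := fun x => ‖z x + k * w x‖ ^ 2)).2 hz
    have hw' : Summable fun x => ‖w (x + 1) + k * z (x + 1)‖ ^ 2 :=
      ((Equiv.addRight 1).summable_iff (f := fun x => ‖w x + k * z x‖ ^ 2)).2 hw
    calc ∑' x, (‖lastStepSum k x (n + 1) true‖ ^ 2 + ‖lastStepSum k x (n + 1) false‖ ^ 2)
        = ∑' x, (‖z (x - 1) + k * w (x - 1)‖ ^ 2 + ‖w (x + 1) + k * z (x + 1)‖ ^ 2) := by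
          simp [z, w, lastStepSum_succ]
      _ = ∑' x, ‖z x + k * w x‖ ^ 2 + ∑' x, ‖w x + k * z x‖ ^ 2 := by
          rw [hz'.tsum_add hw']
          exact congr_arg₂ (· + ·) ((Equiv.subRight 1).tsum_eq fun x => ‖z x + k * w x‖ ^ 2)
            ((Equiv.addRight 1).tsum_eq fun x => ‖w x + k * z x‖ ^ 2)
      _ = ∑' x, (1 + ‖k‖ ^ 2) * (‖z x‖ ^ 2 + ‖w x‖ ^ 2) := by
          rw [← hz.tsum_add hw]
          congr 1 with x
          exact sq_norm_add_mul_add_sq_norm_add_mul hk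
            (im_lastStepSum_true_and_re_lastStepSum_false hk x n).1
            (im_lastStepSum_true_and_re_lastStepSum_false hk x n).2
      _ = (1 + ‖k‖ ^ 2) ^ (n + 1) := by rw [tsum_mul_left, ih, ← pow_succ']

theorem sq_norm_am (x : ℤ) (n : ℕ) (m ε : ℝ) :
    ‖am x (n + 1) m ε‖ ^ 2 =
      (‖lastStepSum (-Complex.I * (m * ε)) x n true‖ ^ 2 +
        ‖lastStepSum (-Complex.I * (m * ε)) x n false‖ ^ 2) / (1 + m ^ 2 * ε ^ 2) ^ n := by
  have hk : (-Complex.I * (m * ε)).re = 0 := by simp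
  have hpos : (0 : ℝ) < 1 + m ^ 2 * ε ^ 2 := by positivity
  have hprefactor : ‖(1 + m ^ 2 * ε ^ 2 : ℂ) ^ ((1 - ((n + 1 : ℤ) : ℂ)) / 2)‖ ^ 2 =
      ((1 + m ^ 2 * ε ^ 2) ^ n)⁻¹ := by
    rw [show (1 + m ^ 2 * ε ^ 2 : ℂ) = ((1 + m ^ 2 * ε ^ 2 : ℝ) : ℂ) by push_cast; rfl,
      Complex.norm_cpow_eq_rpow_re_of_pos hpos, ← Real.rpow_mul_natCast hpos.le _ 2,
      show ((1 - ((n + 1 : ℤ) : ℂ)) / 2).re * (2 : ℕ) = -(n : ℝ) by simp,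
      Real.rpow_neg hpos.le, Real.rpow_natCast]
  rw [am, show ((n : ℤ) + 1).toNat = n + 1 by omega, sum_pathsTo_eq_lastStepSum_add, norm_mul,
    norm_mul, Complex.norm_I, mul_one, mul_pow, hprefactor,
    sq_norm_add_of_im_eq_zero_of_re_eq_zero (im_lastStepSum_true_and_re_lastStepSum_false hk x n).1
      (im_lastStepSum_true_and_re_lastStepSum_false hk x n).2, inv_mul_eq_div]

end FeynmanCheckers

open FeynmanCheckers

theorem probability_conservation_mass_general (m ε : ℝ) (t : ℤ) (ht : 0 < t) :
    ∑' x : ℤ, ‖am x t m ε‖ ^ 2 = 1 := by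
  obtain ⟨n, rfl⟩ : ∃ n : ℕ, t = n + 1 := ⟨t.toNat - 1, by omega⟩
  have hk : ‖-Complex.I * (m * ε)‖ ^ 2 = m ^ 2 * ε ^ 2 := by
    simp [mul_pow, ← Complex.ofReal_mul]
  simp_rw [sq_norm_am]
  rw [tsum_div_const, tsum_sq_norm_lastStepSum (by simp), hk]
  exact div_self (by positivity)

/-- Probability conservation for Feynman checkers with mass m and lattice step ε. -/
theorem probability_conservation_mass (m ε : ℝ) (hε : 0 < ε) (hm : 0 ≤ m)
    (t : ℤ) (ht : 0 < t) :
    ∑' x : ℤ, ‖am x t m ε‖ ^ 2 = 1 :=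
  probability_conservation_mass_general m ε t ht
end
end

section
/- For each (x,t) ∈ εℤ² with t > 0: P(x,t,0,ε) = 1 if x = t and P(x,t,0,ε) = 0 otherwise. Moreover, lim_{m→∞} P(x,t,m,ε) = 1 if (x = 0 or x = ε) and (x+t)/ε is even, and the limit is 0 otherwise. -/
open scoped BigOperators

noncomputable section

/-! With `u = m ε` and `S(u) = ∑ (-i u)^turns` over the paths to `(x, t)`, the probability is
`|S(u)|² / (1 + u²)^(t-1)`, and a path of `t` steps has at most `t - 1` turns. At `u = 0` only the
paths without turns count; as `u → ∞`, substituting `v = 1/u` turns `S(u) / u^(t-1)` into a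
polynomial in `v` whose value at `v = 0` counts the paths with `t - 1` turns. A path is
determined by its first step and its set of turns, so exactly one path has no turns (the straight
one, ending at `x = t`) and exactly one has `t - 1` turns (the zigzag, ending at `x = t mod 2`). -/

open Filter Topology Finset

section Paths

variable {n : ℕ}

theorem turns_le (d : Fin n → Bool) : turns d ≤ n - 1 := by
  refine (card_le_card fun i hi => ?_).trans (card_range (n - 1)).le
  simp only [mem_filter, mem_range] at hi ⊢
  obtain ⟨-, h, -⟩ := hi
  omega

theorem turns_eq_zero_iff (d : Fin n → Bool) :
    turns d = 0 ↔ ∀ i (h : i + 1 < n), d ⟨i, by omega⟩ = d ⟨i + 1, h⟩ := by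
  simp only [turns, card_eq_zero, filter_eq_empty_iff, mem_range]
  exact ⟨fun H i h => not_not.1 fun hne => H (by omega) ⟨h, hne⟩, fun H i _ ⟨h, hne⟩ => hne (H i h)⟩

theorem turns_eq_sub_one_iff (d : Fin n → Bool) :
    turns d = n - 1 ↔ ∀ i (h : i + 1 < n), d ⟨i, by omega⟩ ≠ d ⟨i + 1, h⟩ := by
  have hsub : (range n).filter (fun i => ∃ h : i + 1 < n, d ⟨i, by omega⟩ ≠ d ⟨i + 1, h⟩) ⊆
      range (n - 1) := fun i hi => by
    simp only [mem_filter, mem_range] at hi ⊢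
    obtain ⟨-, h, -⟩ := hi
    omega
  rw [turns, ← card_range (n - 1), ← (card_le_card hsub).ge_iff_eq, eq_iff_card_le_of_subset hsub]
  simp only [Finset.ext_iff, mem_filter, mem_range]
  exact ⟨fun H i h => ((H i).2 (by omega)).2.2,
    fun H i => ⟨fun ⟨_, h, _⟩ => by omega, fun hi => ⟨by omega, by omega, H i (by omega)⟩⟩⟩

theorem eq_of_head_eq_of_turn_iff {d d' : Fin n → Bool} (hn : 0 < n)
    (h0 : d ⟨0, hn⟩ = d' ⟨0, hn⟩)
    (hturn : ∀ i (h : i + 1 < n),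
      (d ⟨i, by omega⟩ = d ⟨i + 1, h⟩ ↔ d' ⟨i, by omega⟩ = d' ⟨i + 1, h⟩)) :
    d = d' := by
  have hbool : ∀ a b b' : Bool, (a = b ↔ a = b') → b = b' := by decide
  funext ⟨i, hi⟩
  induction i with
  | zero => exact h0
  | succ i ih => exact hbool _ _ _ (ih (by omega) ▸ hturn i hi)

def zigzag (n : ℕ) : Fin n → Bool := fun i => decide (Even (i : ℕ))

theorem endpt_const_true : endpt (fun _ : Fin n => true) = n := by
  simp [endpt]

theorem endpt_zigzag : endpt (zigzag n) = n % 2 := by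
  induction n with
  | zero => simp [endpt]
  | succ n ih =>
    rw [endpt, Fin.sum_univ_castSucc]
    simp only [endpt, zigzag, decide_eq_true_eq] at ih
    simp only [zigzag, Fin.val_castSucc, Fin.val_last, decide_eq_true_eq]
    rw [ih]
    split_ifs with h <;> rw [Nat.even_iff] at h <;> omega

theorem card_filter_pathsTo_of_unique {P : (Fin n → Bool) → Prop} [DecidablePred P]
    {p : Fin n → Bool} (hn : 0 < n) (hp : ∀ d, d ⟨0, hn⟩ = true ∧ P d ↔ d = p) (x : ℤ) :
    #((pathsTo x n).filter P) = if endpt p = x then 1 else 0 := by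
  have : (pathsTo x n).filter P = (univ.filter (· = p)).filter (endpt · = x) := by
    ext d
    simp only [pathsTo, mem_filter, mem_univ, true_and, hn, ← hp]
    tauto
  rw [this, filter_eq' univ p, if_pos (mem_univ p), filter_singleton]
  split_ifs <;> rfl

theorem card_filter_pathsTo_turns_eq_zero (hn : 0 < n) (x : ℤ) :
    #((pathsTo x n).filter (turns · = 0)) = if x = n then 1 else 0 := by
  rw [card_filter_pathsTo_of_unique hn (p := fun _ => true) ?_ x, endpt_const_true]
  · simp only [eq_comm]
  intro d
  constructor
  · rintro ⟨h0, ht⟩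
    exact eq_of_head_eq_of_turn_iff hn h0 fun i h => by simp [(turns_eq_zero_iff d).1 ht i h]
  · rintro rfl
    exact ⟨rfl, (turns_eq_zero_iff _).2 fun _ _ => rfl⟩

theorem card_filter_pathsTo_turns_eq_sub_one (hn : 0 < n) (x : ℤ) :
    #((pathsTo x n).filter (turns · = n - 1)) = if x = n % 2 then 1 else 0 := by
  rw [card_filter_pathsTo_of_unique hn (p := zigzag n) ?_ x, endpt_zigzag]
  · simp only [eq_comm]
  have hzig : ∀ i (h : i + 1 < n), zigzag n ⟨i, by omega⟩ ≠ zigzag n ⟨i + 1, h⟩ := fun i h => by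
    simp [zigzag, Nat.even_add_one, -Nat.not_even_iff_odd]
  intro d
  constructor
  · rintro ⟨h0, ht⟩
    refine eq_of_head_eq_of_turn_iff hn (by simpa [zigzag] using h0) fun i h => ?_
    simp [(turns_eq_sub_one_iff d).1 ht i h, hzig i h]
  · rintro rfl
    exact ⟨by simp [zigzag], (turns_eq_sub_one_iff _).2 hzig⟩

end Paths

theorem norm_sum_ofReal_zero_pow_sq_div {ι : Type*} (s : Finset ι) (k : ι → ℕ) (N : ℕ) (z : ℂ) :
    ‖∑ i ∈ s, (z * (0 : ℝ)) ^ k i‖ ^ 2 / (1 + 0 ^ 2) ^ N = (#(s.filter (k · = 0)) : ℝ) ^ 2 := by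
  simp [zero_pow_eq, sum_boole]

theorem tendsto_norm_sum_pow_sq_div {ι : Type*} (s : Finset ι) (k : ι → ℕ) {N : ℕ}
    (hk : ∀ i ∈ s, k i ≤ N) {z : ℂ} (hz : ‖z‖ = 1) :
    Tendsto (fun u : ℝ => ‖∑ i ∈ s, (z * u) ^ k i‖ ^ 2 / (1 + u ^ 2) ^ N) atTop
      (𝓝 ((#(s.filter (k · = N)) : ℝ) ^ 2)) := by
  set G : ℝ → ℝ := fun v => ‖∑ i ∈ s, z ^ k i * (v : ℂ) ^ (N - k i)‖ ^ 2 / (1 + v ^ 2) ^ N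
  have hG : Continuous G :=
    Continuous.div (by fun_prop) (by fun_prop) fun v => by positivity
  have hG0 : G 0 = (#(s.filter (k · = N)) : ℝ) ^ 2 := by
    have : ∑ i ∈ s, z ^ k i * (0 : ℂ) ^ (N - k i) = #(s.filter (k · = N)) * z ^ N := by
      rw [natCast_card_filter, sum_mul]
      refine sum_congr rfl fun i hi => ?_
      rcases (hk i hi).eq_or_lt with h | h
      · simp [h]
      · simp [h.ne, Nat.sub_ne_zero_of_lt h]
    simp [G, this, hz]
  have hGinv : ∀ u : ℝ, 0 < u →
      ‖∑ i ∈ s, (z * u) ^ k i‖ ^ 2 / (1 + u ^ 2) ^ N = G u⁻¹ := by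
    intro u hu
    have hu0 : (u : ℂ) ≠ 0 := by exact_mod_cast hu.ne'
    have hsum : ∑ i ∈ s, (z * u) ^ k i =
        (u : ℂ) ^ N * ∑ i ∈ s, z ^ k i * ((u⁻¹ : ℝ) : ℂ) ^ (N - k i) := by
      rw [mul_sum]
      refine sum_congr rfl fun i hi => ?_
      calc (z * u) ^ k i = z ^ k i * ((u : ℂ) ^ N * ((u : ℂ) ^ (N - k i))⁻¹) := by
            rw [mul_pow, ← pow_sub₀ _ hu0 (Nat.sub_le N (k i)), Nat.sub_sub_self (hk i hi)]
        _ = _ := by push_cast; ring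
    have hden : (1 + u ^ 2) ^ N = (u ^ N) ^ 2 * (1 + u⁻¹ ^ 2) ^ N := by
      rw [← pow_mul, mul_comm N, pow_mul, ← mul_pow]
      field_simp
      ring
    rw [hsum, hden, norm_mul, norm_pow, Complex.norm_real, Real.norm_eq_abs, abs_of_pos hu,
      mul_pow, mul_div_mul_left _ _ (by positivity)]
  rw [← hG0]
  exact ((hG.tendsto 0).comp tendsto_inv_atTop_zero).congr'
    (eventually_gt_atTop 0 |>.mono fun u hu => (hGinv u hu).symm)

theorem norm_ofReal_cpow_neg_half_sq {r : ℝ} (hr : 0 < r) (n : ℕ) :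
    ‖(r : ℂ) ^ ((-(n / 2) : ℝ) : ℂ)‖ ^ 2 = (r ^ n)⁻¹ := by
  rw [Complex.norm_cpow_eq_rpow_re_of_pos hr, Complex.ofReal_re, ← Real.rpow_natCast _ 2,
    ← Real.rpow_mul hr.le, ← Real.rpow_natCast r n, ← Real.rpow_neg hr.le]
  ring_nf

theorem norm_am_sq (x : ℤ) (n : ℕ) (m ε : ℝ) :
    ‖am x (n + 1) m ε‖ ^ 2 =
      ‖∑ d ∈ pathsTo x (n + 1), (-Complex.I * ↑(m * ε)) ^ turns d‖ ^ 2 /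
        (1 + (m * ε) ^ 2) ^ n := by
  have hbase : ((1 + m ^ 2 * ε ^ 2 : ℂ)) ^ ((1 - ((n + 1 : ℤ) : ℂ)) / 2) =
      ((1 + (m * ε) ^ 2 : ℝ) : ℂ) ^ ((-(n / 2) : ℝ) : ℂ) := by
    push_cast
    ring_nf
  rw [am, Int.toNat_natCast_add_one, norm_mul, norm_mul, Complex.norm_I, mul_one, mul_pow, hbase,
    norm_ofReal_cpow_neg_half_sq (by positivity), inv_mul_eq_div]
  push_cast
  rfl

/-- Massless and heavy particles. -/
theorem massless_and_heavy (ε : ℝ) (hε : 0 < ε) (x t : ℤ) (ht : 0 < t) :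
    (‖am x t 0 ε‖ ^ 2 = if x = t then 1 else 0) ∧
    Filter.Tendsto (fun m : ℝ => ‖am x t m ε‖ ^ 2) Filter.atTop
      (nhds (if (x = 0 ∨ x = 1) ∧ Even (x + t) then 1 else 0)) := by
  obtain ⟨n, rfl⟩ : ∃ n : ℕ, t = n + 1 := ⟨t.toNat - 1, by omega⟩
  simp_rw [norm_am_sq]
  constructor
  · rw [zero_mul, norm_sum_ofReal_zero_pow_sq_div, card_filter_pathsTo_turns_eq_zero n.add_one_pos]
    push_cast
    split_ifs <;> simp
  · have hlim := (tendsto_norm_sum_pow_sq_div (pathsTo x (n + 1)) turns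
      (fun d _ => turns_le d) (z := -Complex.I) (by simp)).comp (tendsto_id.atTop_mul_const hε)
    rw [card_filter_pathsTo_turns_eq_sub_one n.add_one_pos] at hlim
    have hC : (x = 0 ∨ x = 1) ∧ Even (x + (n + 1)) ↔ x = ((n + 1 : ℕ) : ℤ) % 2 := by
      rw [Int.even_iff]
      omega
    convert hlim using 2
    · rfl
    · rw [if_congr hC rfl rfl]
      split_ifs <;> simp
end
end
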